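/- Let V be a type and let w : V → V → ℕ be the edge-multiplicity function of a directed multigraph such that every vertex has finite out-degree (for each u the set {v : w(u,v) ≠ 0} is finite). Suppose there is a finite subset S ⊆ V such that: (i) every vertex not in S has out-degree at most 1 and in-degree at most 1; (ii) every based closed directed walk of positive length passes through a vertex of S; and (iii) there exists at least one based closed directed walk of positive length. Then there exists a finite subset C ⊆ V with the following properties: C is strongly connected in the induced sense (for all i, j ∈ C there is a directed walk from i to j all of whose vertices lie in C), C contains a based closed directed walk of positive length, and limsup_{n→∞} (c(n))^{1/n} = limsup_{n→∞} (c_C(n))^{1/n}, where c(n) is the number of based closed directed walks of length n in the whole graph and c_C(n) is the number of based closed directed walks of length n all of whose vertices lie in C. -/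

import Mathlib

open scoped Classical

/-- `walkCount w n i k` is the number of directed walks of length `n` from `i` to `k` in the
directed multigraph with edge-multiplicity function `w`, counted with multiplicity: the walks
along a fixed vertex sequence `i = v₀, v₁, …, vₙ = k` are counted `∏_{t<n} w(v_t, v_{t+1})`
times. -/
noncomputable def walkCount {V : Type*} (w : V → V → ℕ) : ℕ → V → V → ℕ
  | 0, i, k => if i = k then 1 else 0
  | n + 1, i, k => ∑ᶠ v, w i v * walkCount w n v k

/-- `walkCountIn w C n i k` is the number of directed walks of length `n` from `i` to `k`,
counted with multiplicity, all of whose vertices lie in the set `C`. -/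
noncomputable def walkCountIn {V : Type*} (w : V → V → ℕ) (C : Set V) : ℕ → V → V → ℕ
  | 0, i, k => if i = k ∧ i ∈ C then 1 else 0
  | n + 1, i, k => if i ∈ C then ∑ᶠ v, w i v * walkCountIn w C n v k else 0

open scoped ENNReal

/-!
Outside `S` every vertex has at most one outgoing edge, so a walk that leaves `S` is forced along a
chain until it re-enters `S`; since every cycle meets `S`, such a chain can carry only boundedly
many vertices lying on cycles. Hence the recurrent vertices form a finite set, which splits into
finitely many strong components. A closed walk never leaves the strong component of its base
point, so the number of closed walks of length `n` lies between the count in any one component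
and the sum of the counts over all components, and the `n`-th root of a finite sum of sequences
has the same limsup as its largest summand.
-/

open Filter Set Topology

lemma finsum_ne_zero_iff {α : Type*} {f : α → ℕ} (hf : f.HasFiniteSupport) :
    ∑ᶠ a, f a ≠ 0 ↔ ∃ a, f a ≠ 0 := by
  refine ⟨fun h => ?_, fun ⟨a, ha⟩ => ?_⟩
  · by_contra! h0
    exact h (finsum_eq_zero_of_forall_eq_zero h0)
  · exact (finsum_pos (fun _ => Nat.zero_le _) ⟨a, Nat.pos_of_ne_zero ha⟩ hf).ne'

section Growth

open scoped NNReal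

lemma ENNReal.tendsto_rpow_one_div_natCast {c : ℝ≥0∞} (h0 : c ≠ 0) (htop : c ≠ ⊤) :
    Tendsto (fun n : ℕ => c ^ (1 / (n : ℝ))) atTop (𝓝 1) := by
  lift c to ℝ≥0 using htop
  have h0' : c ≠ 0 := by exact_mod_cast h0
  simp_rw [← ENNReal.coe_rpow_of_ne_zero h0']
  have := (tendsto_const_nhds (x := c)).nnrpow tendsto_one_div_atTop_nhds_zero_nat (Or.inl h0')
  rw [NNReal.rpow_zero] at this
  rw [← ENNReal.coe_one]
  exact ENNReal.tendsto_coe.mpr this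

lemma limsup_rpow_sum_le_sup {ι : Type*} {s : Finset ι} (hs : s.Nonempty) (g : ι → ℕ → ℝ≥0∞) :
    limsup (fun n : ℕ => (∑ i ∈ s, g i n) ^ (1 / (n : ℝ))) atTop ≤
      s.sup fun i => limsup (fun n : ℕ => g i n ^ (1 / (n : ℝ))) atTop := by
  have hcard : limsup (fun n : ℕ => (s.card : ℝ≥0∞) ^ (1 / (n : ℝ))) atTop = 1 :=
    (ENNReal.tendsto_rpow_one_div_natCast (by simpa using hs.ne_empty) (by simp)).limsup_eq
  have hroot : ∀ᶠ n : ℕ in atTop, (∑ i ∈ s, g i n) ^ (1 / (n : ℝ)) ≤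
      (s.card : ℝ≥0∞) ^ (1 / (n : ℝ)) * s.sup fun i => g i n ^ (1 / (n : ℝ)) := by
    filter_upwards [eventually_ge_atTop 1] with n hn
    have hpos : (0 : ℝ) < 1 / (n : ℝ) := by positivity
    have hsup : (s.sup fun i => g i n) ^ (1 / (n : ℝ)) = s.sup fun i => g i n ^ (1 / (n : ℝ)) :=
      Finset.apply_sup_eq_sup_comp_of_linearOrder (fun x : ℝ≥0∞ => x ^ (1 / (n : ℝ)))
        (ENNReal.monotone_rpow_of_nonneg hpos.le) (by simpa using ENNReal.zero_rpow_of_pos hpos)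
    rw [← hsup, ← ENNReal.mul_rpow_of_nonneg _ _ hpos.le, ← nsmul_eq_mul]
    refine ENNReal.rpow_le_rpow (Finset.sum_le_card_nsmul _ _ _ fun i hi => ?_) hpos.le
    exact Finset.le_sup (f := fun i => g i n) hi
  calc _ ≤ limsup ((fun n : ℕ => (s.card : ℝ≥0∞) ^ (1 / (n : ℝ))) *
          fun n => s.sup fun i => g i n ^ (1 / (n : ℝ))) atTop := limsup_le_limsup hroot
    _ ≤ limsup (fun n : ℕ => (s.card : ℝ≥0∞) ^ (1 / (n : ℝ))) atTop *
          limsup (fun n : ℕ => s.sup fun i => g i n ^ (1 / (n : ℝ))) atTop :=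
      ENNReal.limsup_mul_le' (.inl (hcard ▸ one_ne_zero)) (.inl (hcard ▸ ENNReal.one_ne_top))
    _ = _ := by rw [hcard, one_mul, limsup_finset_sup]

lemma exists_limsup_rpow_eq_of_le_sum {ι : Type*} {s : Finset ι} (hs : s.Nonempty)
    {u : ℕ → ℝ≥0∞} {g : ι → ℕ → ℝ≥0∞} (hu : ∀ᶠ n in atTop, u n ≤ ∑ i ∈ s, g i n)
    (hg : ∀ i ∈ s, ∀ᶠ n in atTop, g i n ≤ u n) :
    ∃ i ∈ s, limsup (fun n : ℕ => u n ^ (1 / (n : ℝ))) atTop =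
      limsup (fun n : ℕ => g i n ^ (1 / (n : ℝ))) atTop := by
  obtain ⟨i, hi, hmax⟩ :=
    s.exists_max_image (fun i => limsup (fun n : ℕ => g i n ^ (1 / (n : ℝ))) atTop) hs
  refine ⟨i, hi, le_antisymm ?_ ?_⟩
  · calc _ ≤ limsup (fun n : ℕ => (∑ i ∈ s, g i n) ^ (1 / (n : ℝ))) atTop :=
          limsup_le_limsup (hu.mono fun n hn => ENNReal.rpow_le_rpow hn (by positivity))
      _ ≤ _ := limsup_rpow_sum_le_sup hs g
      _ ≤ _ := Finset.sup_le hmax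
  · exact limsup_le_limsup ((hg i hi).mono fun n hn => ENNReal.rpow_le_rpow hn (by positivity))

end Growth

section Walks

variable {V : Type*} {w : V → V → ℕ}

def OutLocallyFinite (w : V → V → ℕ) : Prop := ∀ u, {v | w u v ≠ 0}.Finite

lemma OutLocallyFinite.hasFiniteSupport_mul (hfin : OutLocallyFinite w) (i : V) (f : V → ℕ) :
    (fun v => w i v * f v).HasFiniteSupport :=
  (hfin i).subset fun _ hv => left_ne_zero_of_mul hv

variable {C D S : Set V} {m n : ℕ} {i j k x y : V}

lemma walkCountIn_univ (n : ℕ) (i k : V) : walkCountIn w univ n i k = walkCount w n i k := by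
  induction n generalizing i with
  | zero => simp [walkCountIn, walkCount]
  | succ n ih => simp [walkCountIn, walkCount, ih]

lemma walkCountIn_zero_ne_zero_iff : walkCountIn w C 0 i k ≠ 0 ↔ i = k ∧ i ∈ C := by
  simp [walkCountIn]

lemma mem_of_walkCountIn_ne_zero (h : walkCountIn w C n i k ≠ 0) : i ∈ C ∧ k ∈ C := by
  induction n generalizing i with
  | zero =>
    obtain ⟨rfl, hi⟩ := walkCountIn_zero_ne_zero_iff.mp h
    exact ⟨hi, hi⟩
  | succ n ih =>
    rw [walkCountIn] at h
    split_ifs at h with hi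
    · obtain ⟨v, hv⟩ : ∃ v, w i v * walkCountIn w C n v k ≠ 0 := by
        by_contra! h0
        exact h (finsum_eq_zero_of_forall_eq_zero h0)
      exact ⟨hi, (ih (right_ne_zero_of_mul hv)).2⟩
    · exact absurd rfl h

lemma walkCountIn_succ_ne_zero_iff (hfin : OutLocallyFinite w) :
    walkCountIn w C (n + 1) i k ≠ 0 ↔ i ∈ C ∧ ∃ v, w i v ≠ 0 ∧ walkCountIn w C n v k ≠ 0 := by
  rw [walkCountIn]
  split_ifs with hi
  · simp [hi, finsum_ne_zero_iff (hfin.hasFiniteSupport_mul i _)]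
  · simp [hi]

lemma walkCountIn_add_ne_zero_iff (hfin : OutLocallyFinite w) :
    walkCountIn w C (m + n) i k ≠ 0 ↔
      ∃ j, walkCountIn w C m i j ≠ 0 ∧ walkCountIn w C n j k ≠ 0 := by
  induction m generalizing i with
  | zero =>
    simp only [zero_add, walkCountIn_zero_ne_zero_iff]
    exact ⟨fun h => ⟨i, ⟨rfl, (mem_of_walkCountIn_ne_zero h).1⟩, h⟩, fun ⟨_, ⟨rfl, _⟩, h⟩ => h⟩
  | succ m ih =>
    rw [Nat.add_right_comm]
    simp only [walkCountIn_succ_ne_zero_iff hfin, ih]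
    constructor
    · rintro ⟨hi, v, hv, j, hvj, hjk⟩
      exact ⟨j, ⟨hi, v, hv, hvj⟩, hjk⟩
    · rintro ⟨j, ⟨hi, v, hv, hvj⟩, hjk⟩
      exact ⟨hi, v, hv, j, hvj, hjk⟩

lemma walkCount_succ_ne_zero_iff (hfin : OutLocallyFinite w) :
    walkCount w (n + 1) i k ≠ 0 ↔ ∃ v, w i v ≠ 0 ∧ walkCount w n v k ≠ 0 := by
  simpa [walkCountIn_univ] using walkCountIn_succ_ne_zero_iff (C := univ) (n := n) (i := i) hfin

lemma walkCount_add_ne_zero_iff (hfin : OutLocallyFinite w) :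
    walkCount w (m + n) i k ≠ 0 ↔ ∃ j, walkCount w m i j ≠ 0 ∧ walkCount w n j k ≠ 0 := by
  simpa [walkCountIn_univ] using walkCountIn_add_ne_zero_iff (C := univ) (m := m) (i := i) hfin

lemma walkCountIn_mono (hfin : OutLocallyFinite w) (hCD : C ⊆ D) (n : ℕ) (i k : V) :
    walkCountIn w C n i k ≤ walkCountIn w D n i k := by
  induction n generalizing i with
  | zero =>
    simp only [walkCountIn]
    split_ifs with hC hD
    exacts [le_rfl, absurd ⟨hC.1, hCD hC.2⟩ hD, Nat.zero_le _, le_rfl]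
  | succ n ih =>
    simp only [walkCountIn]
    split_ifs with hC hD
    · exact finsum_le_finsum' (hfin.hasFiniteSupport_mul i _) (hfin.hasFiniteSupport_mul i _)
        fun v => Nat.mul_le_mul_left _ (ih v)
    exacts [absurd (hCD hC) hD, Nat.zero_le _, le_rfl]

lemma walkCountIn_le_walkCount (hfin : OutLocallyFinite w) (C : Set V) (n : ℕ) (i k : V) :
    walkCountIn w C n i k ≤ walkCount w n i k :=
  walkCountIn_univ (w := w) n i k ▸ walkCountIn_mono hfin (subset_univ C) n i k

lemma subsingleton_walkCountIn_ne_zero (hfin : OutLocallyFinite w)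
    (hout : ∀ u ∈ C, {v | w u v ≠ 0}.Subsingleton) (n : ℕ) (i : V) :
    {k | walkCountIn w C n i k ≠ 0}.Subsingleton := by
  induction n generalizing i with
  | zero =>
    intro k hk k' hk'
    exact (walkCountIn_zero_ne_zero_iff.mp hk).1.symm.trans (walkCountIn_zero_ne_zero_iff.mp hk').1
  | succ n ih =>
    intro k hk k' hk'
    obtain ⟨hi, v, hv, hvk⟩ := (walkCountIn_succ_ne_zero_iff hfin).mp hk
    obtain ⟨-, v', hv', hvk'⟩ := (walkCountIn_succ_ne_zero_iff hfin).mp hk'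
    obtain rfl : v = v' := hout i hi hv hv'
    exact ih v hvk hvk'

lemma walkCountIn_ne_zero_or_exists_exit (hfin : OutLocallyFinite w) (hi : i ∈ C)
    (h : walkCount w n i k ≠ 0) :
    walkCountIn w C n i k ≠ 0 ∨ ∃ t j s, walkCountIn w C t i j ≠ 0 ∧ s ∉ C ∧ w j s ≠ 0 := by
  induction n generalizing i with
  | zero =>
    have hik : i = k := by simpa [walkCount] using h
    exact .inl (walkCountIn_zero_ne_zero_iff.mpr ⟨hik, hi⟩)
  | succ n ih =>
    obtain ⟨v, hv, hvk⟩ := (walkCount_succ_ne_zero_iff hfin).mp h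
    by_cases hvC : v ∈ C
    · rcases ih hvC hvk with hin | ⟨t, j, s, hvj, hs, hjs⟩
      · exact .inl ((walkCountIn_succ_ne_zero_iff hfin).mpr ⟨hi, v, hv, hin⟩)
      · exact .inr ⟨t + 1, j, s, (walkCountIn_succ_ne_zero_iff hfin).mpr ⟨hi, v, hv, hvj⟩, hs, hjs⟩
    · exact .inr ⟨0, i, v, walkCountIn_zero_ne_zero_iff.mpr ⟨rfl, hi⟩, hvC, hv⟩

lemma walkCountIn_ne_zero_or_exists_entry (hfin : OutLocallyFinite w) (hk : k ∈ C)
    (h : walkCount w n i k ≠ 0) :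
    walkCountIn w C n i k ≠ 0 ∨ ∃ s v q, s ∉ C ∧ w s v ≠ 0 ∧ walkCountIn w C q v k ≠ 0 := by
  induction n generalizing i with
  | zero =>
    have hik : i = k := by simpa [walkCount] using h
    exact .inl (walkCountIn_zero_ne_zero_iff.mpr ⟨hik, hik ▸ hk⟩)
  | succ n ih =>
    obtain ⟨v, hv, hvk⟩ := (walkCount_succ_ne_zero_iff hfin).mp h
    rcases ih hvk with hin | hentry
    · by_cases hi : i ∈ C
      · exact .inl ((walkCountIn_succ_ne_zero_iff hfin).mpr ⟨hi, v, hv, hin⟩)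
      · exact .inr ⟨i, v, n, hi, hv, hin⟩
    · exact .inr hentry

/-- Walks from `v` inside `C` are forced, and the only continuation past `j` leaves `C`. -/
lemma le_of_walkCountIn_ne_zero_of_exit (hfin : OutLocallyFinite w)
    (hout : ∀ u ∈ C, {v | w u v ≠ 0}.Subsingleton) {a c : ℕ} {v j y s : V}
    (hexit : walkCountIn w C a v j ≠ 0) (hs : s ∉ C) (hjs : w j s ≠ 0)
    (hc : walkCountIn w C c v y ≠ 0) : c ≤ a := by
  by_contra! hac
  obtain ⟨d, rfl⟩ : ∃ d, c = a + (d + 1) := ⟨c - a - 1, by omega⟩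
  obtain ⟨x, hvx, hxy⟩ := (walkCountIn_add_ne_zero_iff hfin).mp hc
  obtain rfl : x = j := subsingleton_walkCountIn_ne_zero hfin hout a v hvx hexit
  obtain ⟨hxC, z, hxz, hzy⟩ := (walkCountIn_succ_ne_zero_iff hfin).mp hxy
  obtain rfl : z = s := hout x hxC hxz hjs
  exact hs (mem_of_walkCountIn_ne_zero hzy).1

def recurrentVertices (w : V → V → ℕ) : Set V := {u | ∃ n, 1 ≤ n ∧ walkCount w n u u ≠ 0}

def WalkReachable (w : V → V → ℕ) (i j : V) : Prop := ∃ n, walkCount w n i j ≠ 0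

def strongComponent (w : V → V → ℕ) (i : V) : Set V :=
  {j | WalkReachable w i j ∧ WalkReachable w j i}

lemma WalkReachable.refl (w : V → V → ℕ) (i : V) : WalkReachable w i i := ⟨0, by simp [walkCount]⟩

lemma WalkReachable.head (hfin : OutLocallyFinite w) (hij : w i j ≠ 0)
    (hjk : WalkReachable w j k) : WalkReachable w i k :=
  let ⟨n, hn⟩ := hjk
  ⟨n + 1, (walkCount_succ_ne_zero_iff hfin).mpr ⟨j, hij, hn⟩⟩

lemma WalkReachable.trans (hij : WalkReachable w i j) (hfin : OutLocallyFinite w)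
    (hjk : WalkReachable w j k) : WalkReachable w i k :=
  let ⟨a, ha⟩ := hij
  let ⟨b, hb⟩ := hjk
  ⟨a + b, (walkCount_add_ne_zero_iff hfin).mpr ⟨j, ha, hb⟩⟩

lemma mem_strongComponent : j ∈ strongComponent w i ↔ WalkReachable w i j ∧ WalkReachable w j i :=
  Iff.rfl

lemma mem_strongComponent_self (w : V → V → ℕ) (i : V) : i ∈ strongComponent w i :=
  ⟨.refl w i, .refl w i⟩

lemma walkCountIn_eq_walkCount_of_forall (hfin : OutLocallyFinite w)
    (hC : ∀ j, WalkReachable w i j → WalkReachable w j k → j ∈ C) (n : ℕ) :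
    walkCountIn w C n i k = walkCount w n i k := by
  induction n generalizing i with
  | zero =>
    simp only [walkCountIn, walkCount]
    by_cases hik : i = k
    · subst hik
      simp [hC i (.refl w i) (.refl w i)]
    · simp [hik]
  | succ n ih =>
    by_cases hi : i ∈ C
    · simp only [walkCountIn, walkCount, if_pos hi]
      refine finsum_congr fun v => ?_
      rcases eq_or_ne (w i v) 0 with hv | hv
      · simp [hv]
      · rw [ih fun j hvj hjk => hC j (.head hfin hv hvj) hjk]
    · have h0 : walkCount w (n + 1) i k = 0 := by
        by_contra h
        exact hi (hC i (.refl w i) ⟨n + 1, h⟩)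
      simp [walkCountIn, hi, h0]

lemma walkCountIn_strongComponent (hfin : OutLocallyFinite w) (hx : x ∈ strongComponent w i)
    (hy : y ∈ strongComponent w i) (n : ℕ) :
    walkCountIn w (strongComponent w i) n x y = walkCount w n x y :=
  walkCountIn_eq_walkCount_of_forall hfin
    (fun _ hxj hjy => mem_strongComponent.mpr ⟨hx.1.trans hfin hxj, hjy.trans hfin hy.2⟩) n

lemma strongComponent_subset_recurrentVertices (hfin : OutLocallyFinite w)
    (hi : i ∈ recurrentVertices w) : strongComponent w i ⊆ recurrentVertices w := by
  rintro j ⟨⟨a, ha⟩, ⟨b, hb⟩⟩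
  obtain ⟨m, hm, hii⟩ := hi
  refine ⟨b + (m + a), by omega, ?_⟩
  exact (walkCount_add_ne_zero_iff hfin).mpr
    ⟨i, hb, (walkCount_add_ne_zero_iff hfin).mpr ⟨i, hii, ha⟩⟩

lemma bddAbove_lengths_walkCountIn_recurrentVertices (hfin : OutLocallyFinite w)
    (hout : ∀ u ∈ C, {v | w u v ≠ 0}.Subsingleton)
    (hacyclic : ∀ n, 1 ≤ n → ∀ i, walkCountIn w C n i i = 0) (v : V) :
    BddAbove {q | ∃ u ∈ recurrentVertices w, walkCountIn w C q v u ≠ 0} := by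
  rcases eq_empty_or_nonempty {q | ∃ u ∈ recurrentVertices w, walkCountIn w C q v u ≠ 0}
    with h | ⟨q, u, ⟨n, hn, huu⟩, hvu⟩
  · simp [h]
  obtain ⟨t, j, s, huj, hs, hjs⟩ :=
    (walkCountIn_ne_zero_or_exists_exit hfin (mem_of_walkCountIn_ne_zero hvu).2 huu).resolve_left
      (not_not.mpr (hacyclic n hn u))
  rw [bddAbove_def]
  exact ⟨q + t, fun c ⟨_, _, hvy⟩ => le_of_walkCountIn_ne_zero_of_exit hfin hout
    ((walkCountIn_add_ne_zero_iff hfin).mpr ⟨u, hvu, huj⟩) hs hjs hvy⟩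

lemma recurrentVertices_finite (hfin : OutLocallyFinite w) (hS : S.Finite)
    (hout : ∀ u ∉ S, {v | w u v ≠ 0}.Subsingleton)
    (hthrough : ∀ n, 1 ≤ n → ∀ i, walkCountIn w Sᶜ n i i = 0) :
    (recurrentVertices w).Finite := by
  have hchain (v : V) :
      {u | u ∈ recurrentVertices w ∧ ∃ q, walkCountIn w Sᶜ q v u ≠ 0}.Finite :=
    ((bddAbove_lengths_walkCountIn_recurrentVertices hfin hout hthrough v).finite.biUnion
      fun q _ => (subsingleton_walkCountIn_ne_zero hfin hout q v).finite).subset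
      fun u ⟨hu, q, hq⟩ => mem_biUnion ⟨u, hu, hq⟩ hq
  refine (hS.union (hS.biUnion fun s _ => (hfin s).biUnion fun v _ => hchain v)).subset
    fun u hu => ?_
  by_cases huS : u ∈ S
  · exact .inl huS
  obtain ⟨n, hn, huu⟩ := hu
  obtain ⟨s, v, q, hs, hsv, hq⟩ :=
    (walkCountIn_ne_zero_or_exists_entry hfin huS huu).resolve_left
      (not_not.mpr (hthrough n hn u))
  exact .inr (mem_biUnion (not_not.mp hs) (mem_biUnion hsv ⟨⟨n, hn, huu⟩, q, hq⟩))

lemma finsum_walkCountIn_le_finsum_walkCount (hfin : OutLocallyFinite w)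
    (hR : (recurrentVertices w).Finite) (hn : 1 ≤ n) (C : Set V) :
    ∑ᶠ x, walkCountIn w C n x x ≤ ∑ᶠ x, walkCount w n x x := by
  have hle := fun x => walkCountIn_le_walkCount hfin C n x x
  refine finsum_le_finsum' (hR.subset fun x hx => ⟨n, hn, ?_⟩) (hR.subset fun x hx => ⟨n, hn, hx⟩)
    hle
  exact (Nat.pos_of_ne_zero hx |>.trans_le (hle x)).ne'

lemma finsum_walkCount_le_sum_strongComponent (hfin : OutLocallyFinite w)
    (hR : (recurrentVertices w).Finite) (hn : 1 ≤ n) :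
    ∑ᶠ x, walkCount w n x x ≤
      ∑ i ∈ hR.toFinset, ∑ᶠ x, walkCountIn w (strongComponent w i) n x x := by
  rw [finsum_eq_finsetSum_of_support_subset _ (s := hR.toFinset)
    (by simpa using fun x hx => ⟨n, hn, hx⟩)]
  refine Finset.sum_le_sum fun i hi => ?_
  rw [hR.mem_toFinset] at hi
  have hiK := mem_strongComponent_self w i
  have hsupport : (fun x => walkCountIn w (strongComponent w i) n x x).HasFiniteSupport :=
    hR.subset fun x hx =>
      strongComponent_subset_recurrentVertices hfin hi (mem_of_walkCountIn_ne_zero hx).1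
  calc walkCount w n i i = walkCountIn w (strongComponent w i) n i i :=
        (walkCountIn_strongComponent hfin hiK hiK n).symm
    _ ≤ ∑ᶠ x, walkCountIn w (strongComponent w i) n x x :=
        single_le_finsum i hsupport fun _ => Nat.zero_le _

end Walks

/-- For a directed multigraph with finite out-degrees admitting a finite subset `S` such that
every vertex outside `S` has out-degree and in-degree at most one, every closed directed walk
of positive length passes through `S`, and some closed directed walk of positive length exists:
the exponential growth rate of the number of based closed directed walks of length `n` is
achieved on some finite strongly connected subset `C` containing a closed directed walk of
positive length. -/
theorem cycle_growth_achieved_on_recurrent_component {V : Type*} (w : V → V → ℕ)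
    (hfin : ∀ u : V, {v | w u v ≠ 0}.Finite)
    (S : Set V) (hS : S.Finite)
    (hdeg : ∀ u ∉ S,
      (∃ v₀, w u v₀ ≤ 1 ∧ ∀ v, v ≠ v₀ → w u v = 0) ∧
      (∃ x₀, w x₀ u ≤ 1 ∧ ∀ x, x ≠ x₀ → w x u = 0))
    (hthrough : ∀ n, 1 ≤ n → ∀ i, walkCountIn w Sᶜ n i i = 0)
    (hexists : ∃ n, 1 ≤ n ∧ ∃ i, walkCount w n i i ≠ 0) :
    ∃ C : Set V, C.Finite ∧
      (∀ i ∈ C, ∀ j ∈ C, ∃ n : ℕ, walkCountIn w C n i j ≠ 0) ∧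
      (∃ n, 1 ≤ n ∧ ∃ i, walkCountIn w C n i i ≠ 0) ∧
      Filter.limsup
          (fun n : ℕ => ((∑ᶠ i, walkCount w n i i : ℕ) : ℝ≥0∞) ^ (1 / (n : ℝ)))
          Filter.atTop =
        Filter.limsup
          (fun n : ℕ => ((∑ᶠ i, walkCountIn w C n i i : ℕ) : ℝ≥0∞) ^ (1 / (n : ℝ)))
          Filter.atTop := by
  have hout : ∀ u ∉ S, {v | w u v ≠ 0}.Subsingleton := fun u hu v hv v' hv' => by
    obtain ⟨v₀, -, hv₀⟩ := (hdeg u hu).1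
    exact (not_imp_comm.mp (hv₀ v) hv).trans (not_imp_comm.mp (hv₀ v') hv').symm
  have hR := recurrentVertices_finite hfin hS hout hthrough
  obtain ⟨n₀, hn₀, i₀, hi₀⟩ := hexists
  obtain ⟨j, hj, hgrowth⟩ := exists_limsup_rpow_eq_of_le_sum
    (s := hR.toFinset) ⟨i₀, hR.mem_toFinset.mpr ⟨n₀, hn₀, hi₀⟩⟩
    (u := fun n => ((∑ᶠ x, walkCount w n x x : ℕ) : ℝ≥0∞))
    (g := fun i n => ((∑ᶠ x, walkCountIn w (strongComponent w i) n x x : ℕ) : ℝ≥0∞))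
    ((eventually_ge_atTop 1).mono fun n hn => by
      exact_mod_cast finsum_walkCount_le_sum_strongComponent hfin hR hn)
    (fun i _ => (eventually_ge_atTop 1).mono fun n hn => by
      exact_mod_cast finsum_walkCountIn_le_finsum_walkCount hfin hR hn _)
  obtain ⟨m, hm, hjj⟩ := hR.mem_toFinset.mp hj
  have hjK := mem_strongComponent_self w j
  refine ⟨strongComponent w j,
    hR.subset (strongComponent_subset_recurrentVertices hfin ⟨m, hm, hjj⟩),
    fun x hx y hy => ?_, ⟨m, hm, j, ?_⟩, hgrowth⟩
  · obtain ⟨n, hn⟩ := hx.2.trans hfin hy.1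
    exact ⟨n, by rwa [walkCountIn_strongComponent hfin hx hy]⟩
  · rwa [walkCountIn_strongComponent hfin hjK hjK]
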